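/- There exist constants c_1, c_2 > 0 depending only on d such that for every bounded nonempty set E ⊆ ℝ^d and every r > 0, c_1 · N_r(E)^{-1} ≤ inf_{μ ∈ 𝒫(E)} ∫ μ(B(x,r)) dμ(x) ≤ c_2 · N_r(E)^{-1}, where the integral equals (μ×μ){(x,y) ∈ E×E : |x−y| ≤ r}. -/

import Mathlib

open MeasureTheory Metric Filter Set Topology

/-- The topological support of a measure: points all of whose neighbourhoods
have positive measure. -/
def msupport {X : Type*} [TopologicalSpace X] [MeasurableSpace X]
    (μ : Measure X) : Set X :=
  {x | ∀ U : Set X, IsOpen U → x ∈ U → μ U ≠ 0}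

/-- The collection of Borel probability measures whose support is contained in `E`. -/
def probOn {X : Type*} [TopologicalSpace X] [MeasurableSpace X]
    (E : Set X) : Set (Measure X) :=
  {μ | IsProbabilityMeasure μ ∧ msupport μ ⊆ E}

/-- The correlation integral `∫ μ(B(x,r)) dμ(x)` (as a real number). -/
noncomputable def corrInt {X : Type*} [MetricSpace X] [MeasurableSpace X]
    (μ : Measure X) (r : ℝ) : ℝ :=
  (∫⁻ x, μ (closedBall x r) ∂μ).toReal

/-- Lower correlation dimension of a measure. -/
noncomputable def lcod {X : Type*} [MetricSpace X] [MeasurableSpace X]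
    (μ : Measure X) : ℝ :=
  liminf (fun r : ℝ => Real.log (corrInt μ r) / Real.log r) (𝓝[>] 0)

/-- Upper correlation dimension of a measure. -/
noncomputable def ucod {X : Type*} [MetricSpace X] [MeasurableSpace X]
    (μ : Measure X) : ℝ :=
  limsup (fun r : ℝ => Real.log (corrInt μ r) / Real.log r) (𝓝[>] 0)

/-- Upper correlation dimension of a set. -/
noncomputable def ucodSet {X : Type*} [MetricSpace X] [MeasurableSpace X]
    (E : Set X) : ℝ :=
  sSup (ucod '' probOn E)

/-- `coverNum E r` is the least number of sets of diameter at most `r` needed to cover `E`. -/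
noncomputable def coverNum {X : Type*} [MetricSpace X] (E : Set X) (r : ℝ) : ℕ :=
  sInf {n : ℕ | ∃ 𝒰 : Finset (Set X), 𝒰.card = n ∧
    (∀ U ∈ 𝒰, EMetric.diam U ≤ ENNReal.ofReal r) ∧ E ⊆ ⋃ U ∈ 𝒰, U}

/-- Lower box-counting dimension. -/
noncomputable def lbd {X : Type*} [MetricSpace X] (E : Set X) : ℝ :=
  liminf (fun r : ℝ => Real.log (coverNum E r : ℝ) / (-Real.log r)) (𝓝[>] 0)

/-- Upper box-counting dimension. -/
noncomputable def ubd {X : Type*} [MetricSpace X] (E : Set X) : ℝ :=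
  limsup (fun r : ℝ => Real.log (coverNum E r : ℝ) / (-Real.log r)) (𝓝[>] 0)

/-- Modified lower box dimension. -/
noncomputable def mlbd {X : Type*} [MetricSpace X] (E : Set X) : ℝ :=
  sInf {s : ℝ | ∃ F : ℕ → Set X, (∀ i, IsCompact (F i)) ∧ E ⊆ ⋃ i, F i ∧
    ∀ i, lbd (F i) ≤ s}

/-- Modified upper box dimension (= packing dimension). -/
noncomputable def mubd {X : Type*} [MetricSpace X] (E : Set X) : ℝ :=
  sInf {s : ℝ | ∃ F : ℕ → Set X, (∀ i, IsCompact (F i)) ∧ E ⊆ ⋃ i, F i ∧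
    ∀ i, ubd (F i) ≤ s}

/-- Fourier transform of a measure on Euclidean space. -/
noncomputable def ftMeas {d : ℕ} (μ : Measure (EuclideanSpace ℝ (Fin d)))
    (z : EuclideanSpace ℝ (Fin d)) : ℂ :=
  ∫ x, Complex.exp (Complex.I * (inner ℝ x z : ℝ)) ∂μ

/-!
Lower bound: cover `E` by `N = N_r(E)` sets of diameter at most `r` and cut their closures into
disjoint Borel pieces `Wᵢ`. Each `Wᵢ` lies in the closed `r`-ball around any of its points, so
`∫ μ(B(x,r)) dμ(x) ≥ ∑ μ(Wᵢ)² ≥ (∑ μ(Wᵢ))² / N = 1 / N` by Cauchy–Schwarz.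

Upper bound: let `T ⊆ E` be a maximal `r`-separated set. The uniform measure on `T` gives each
point mass `1 / #T` and its `r`-balls meet `T` in a single point, so its correlation integral is
`1 / #T`. By maximality the `r`-balls around `T` cover `E`, and by scaling every `r`-ball in `ℝ^d`
is covered by `C(d) = N_1(B(0,1))` sets of diameter `r`; hence `N_r(E) ≤ C(d) · #T`.
-/

open scoped ENNReal NNReal
open ProbabilityTheory Bornology

section Support

variable {X : Type*} [TopologicalSpace X] [MeasurableSpace X]

lemma measure_compl_msupport [SecondCountableTopology X] (μ : Measure X) :
    μ (msupport μ)ᶜ = 0 := by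
  refine measure_null_of_locally_null _ fun x hx => ?_
  simp only [msupport, mem_compl_iff, mem_ofPred_eq, not_forall, not_not] at hx
  obtain ⟨U, hU, hxU, hμU⟩ := hx
  exact ⟨U, mem_nhdsWithin_of_mem_nhds (hU.mem_nhds hxU), hμU⟩

lemma measure_compl_eq_zero_of_mem_probOn [SecondCountableTopology X] {E : Set X}
    {μ : Measure X} (hμ : μ ∈ probOn E) : μ Eᶜ = 0 :=
  measure_mono_null (compl_subset_compl.2 hμ.2) (measure_compl_msupport μ)

lemma uniformOn_mem_probOn [T1Space X] [MeasurableSingletonClass X] {E S : Set X}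
    (hS : S.Finite) (hne : S.Nonempty) (hSE : S ⊆ E) : uniformOn S ∈ probOn E := by
  refine ⟨isProbabilityMeasure_uniformOn hS hne, fun x hx => ?_⟩
  by_contra hxE
  exact hx Sᶜ hS.isClosed.isOpen_compl (fun hxS => hxE (hSE hxS))
    ((uniformOn_eq_zero_iff hS).2 (inter_compl_self S))

end Support

lemma subset_closedBall_of_ediam_le {X : Type*} [PseudoMetricSpace X] {s : Set X} {r : ℝ}
    {x : X} (hx : x ∈ s) (hs : ediam s ≤ ENNReal.ofReal r) (hr : 0 ≤ r) :
    s ⊆ closedBall x r := fun _ hy =>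
  (edist_le_ofReal hr).1 ((edist_le_ediam_of_mem hy hx).trans hs)

lemma TotallyBounded.packingNumber_ne_top {X : Type*} [PseudoEMetricSpace X] {s : Set X}
    {ε : ℝ≥0} (hε : ε ≠ 0) (hs : TotallyBounded s) : packingNumber ε s ≠ ⊤ := by
  obtain ⟨N, -, hNfin, hN⟩ :=
    exists_finite_isCover_of_totallyBounded (ε := ε / 2) (by simpa using hε) hs
  have h2 : 2 * (ε / 2) = ε := mul_div_cancel₀ ε two_ne_zero
  refine ne_top_of_le_ne_top (Set.encard_ne_top_iff.2 hNfin) ?_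
  calc packingNumber ε s = packingNumber (2 * (ε / 2)) s := by rw [h2]
    _ ≤ externalCoveringNumber (ε / 2) s := packingNumber_two_mul_le_externalCoveringNumber _ _
    _ ≤ N.encard := hN.externalCoveringNumber_le_encard

lemma closedBall_inter_eq_singleton_of_isSeparated {X : Type*} [PseudoMetricSpace X] {r : ℝ}
    {S : Set X} (hS : IsSeparated (ENNReal.ofReal r) S) {t : X} (ht : t ∈ S) (hr : 0 ≤ r) :
    closedBall t r ∩ S = {t} := by
  refine subset_antisymm (fun s ⟨hs, hsS⟩ => ?_)
    (singleton_subset_iff.2 ⟨mem_closedBall_self hr, ht⟩)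
  by_contra hst
  exact (hS hsS ht hst).not_ge ((edist_le_ofReal hr).2 hs)

section CoveringNumber

variable {X : Type*} [MetricSpace X] {E : Set X} {r : ℝ}

lemma coverNum_le_card (𝒰 : Finset (Set X)) (hdiam : ∀ U ∈ 𝒰, ediam U ≤ ENNReal.ofReal r)
    (hcov : E ⊆ ⋃ U ∈ 𝒰, U) : coverNum E r ≤ 𝒰.card :=
  Nat.sInf_le ⟨𝒰, rfl, hdiam, hcov⟩

variable [ProperSpace X]

lemma exists_finset_card_eq_coverNum (hE : IsBounded E) (hr : 0 < r) :
    ∃ 𝒰 : Finset (Set X), 𝒰.card = coverNum E r ∧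
      (∀ U ∈ 𝒰, ediam U ≤ ENNReal.ofReal r) ∧ E ⊆ ⋃ U ∈ 𝒰, U := by
  classical
  obtain ⟨N, -, hNfin, hN⟩ := exists_finite_isCover_of_totallyBounded
    (ε := (r / 2).toNNReal) (by simpa using hr)
    (hE.isCompact_closure.totallyBounded.subset subset_closure)
  refine Nat.sInf_mem (s := {n | ∃ 𝒰 : Finset (Set X), 𝒰.card = n ∧
    (∀ U ∈ 𝒰, ediam U ≤ ENNReal.ofReal r) ∧ E ⊆ ⋃ U ∈ 𝒰, U})
    ⟨_, hNfin.toFinset.image (closedBall · (r / 2)), rfl, ?_, ?_⟩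
  · simp only [Finset.mem_image, forall_exists_index, and_imp, forall_apply_eq_imp_iff₂]
    refine fun y _ => ediam_le_of_forall_dist_le fun a ha b hb => ?_
    linarith [dist_triangle_right a b y, mem_closedBall.1 ha, mem_closedBall.1 hb]
  · simpa [isCover_iff_subset_iUnion_closedBall, Real.coe_toNNReal _ (half_pos hr).le] using hN

lemma coverNum_pos (hE : IsBounded E) (hne : E.Nonempty) (hr : 0 < r) : 0 < coverNum E r := by
  obtain ⟨𝒰, hcard, -, hcov⟩ := exists_finset_card_eq_coverNum hE hr
  obtain ⟨x, hx⟩ := hne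
  obtain ⟨U, hU, -⟩ := mem_iUnion₂.1 (hcov hx)
  exact hcard ▸ Finset.card_pos.2 ⟨U, hU⟩

lemma coverNum_le_sum_of_subset_biUnion {ι : Type*} (S : Finset ι) {F : ι → Set X}
    (hF : ∀ i ∈ S, IsBounded (F i)) (hE : E ⊆ ⋃ i ∈ S, F i) (hr : 0 < r) :
    coverNum E r ≤ ∑ i ∈ S, coverNum (F i) r := by
  classical
  choose! 𝒰 hcard hdiam hcov using
    fun i (hi : i ∈ S) => exists_finset_card_eq_coverNum (hF i hi) hr
  calc coverNum E r ≤ (S.biUnion 𝒰).card := by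
        refine coverNum_le_card _ (fun U hU => ?_) fun x hx => ?_
        · obtain ⟨i, hi, hU⟩ := Finset.mem_biUnion.1 hU
          exact hdiam i hi U hU
        · obtain ⟨i, hi, hxi⟩ := mem_iUnion₂.1 (hE hx)
          obtain ⟨U, hU, hxU⟩ := mem_iUnion₂.1 (hcov i hi hxi)
          exact mem_biUnion (Finset.mem_biUnion.2 ⟨i, hi, hU⟩) hxU
    _ ≤ ∑ i ∈ S, (𝒰 i).card := Finset.card_biUnion_le
    _ = ∑ i ∈ S, coverNum (F i) r := Finset.sum_congr rfl hcard

end CoveringNumber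

lemma coverNum_closedBall_le {V : Type*} [NormedAddCommGroup V] [NormedSpace ℝ V]
    [ProperSpace V] (x : V) {r : ℝ} (hr : 0 < r) :
    coverNum (closedBall x r) r ≤ coverNum (closedBall (0 : V) 1) 1 := by
  classical
  obtain ⟨𝒰, hcard, hdiam, hcov⟩ :=
    exists_finset_card_eq_coverNum (isBounded_closedBall (x := (0 : V)) (r := 1)) one_pos
  set f : V → V := fun y => x + r • y
  have hf : LipschitzWith r.toNNReal f := LipschitzWith.of_dist_le_mul fun a b => by
    simp [f, dist_smul₀, abs_of_pos hr, hr.le]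
  rw [← hcard]
  refine (coverNum_le_card (𝒰.image (f '' ·)) ?_ fun z hz => ?_).trans Finset.card_image_le
  · simp only [Finset.mem_image, forall_exists_index, and_imp, forall_apply_eq_imp_iff₂]
    intro U hU
    calc ediam (f '' U) ≤ r.toNNReal * ediam U := hf.ediam_image_le U
      _ ≤ r.toNNReal * ENNReal.ofReal 1 := by gcongr; exact hdiam U hU
      _ = ENNReal.ofReal r := by simp [ENNReal.ofReal]
  · have hz' : r⁻¹ • (z - x) ∈ closedBall (0 : V) 1 := by
      rw [mem_closedBall, dist_zero_right, norm_smul, Real.norm_eq_abs, abs_inv, abs_of_pos hr,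
        inv_mul_le_iff₀ hr, mul_one, ← dist_eq_norm]
      exact hz
    obtain ⟨U, hU, hzU⟩ := mem_iUnion₂.1 (hcov hz')
    refine mem_biUnion (Finset.mem_image_of_mem _ hU) ⟨_, hzU, ?_⟩
    simp [f, smul_smul, hr.ne']

lemma ENNReal.inv_card_le_sum_sq {ι : Type*} (s : Finset ι) {a : ι → ℝ≥0∞}
    (h : 1 ≤ ∑ i ∈ s, a i) : ((s.card : ℝ≥0∞))⁻¹ ≤ ∑ i ∈ s, a i ^ 2 := by
  have hs : s.Nonempty := Finset.nonempty_of_sum_ne_zero (one_pos.trans_le h).ne'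
  by_cases htop : ∃ i ∈ s, a i = ⊤
  · obtain ⟨i, hi, hai⟩ := htop
    exact le_top.trans_eq (ENNReal.sum_eq_top.2 ⟨i, hi, by simp [hai]⟩).symm
  simp only [not_exists, not_and] at htop
  have hcoe : ∀ i ∈ s, a i = (a i).toNNReal := fun i hi =>
    (ENNReal.coe_toNNReal (htop i hi)).symm
  rw [Finset.sum_congr rfl hcoe] at h
  rw [Finset.sum_congr rfl fun i hi => by rw [hcoe i hi],
    ENNReal.inv_le_iff_le_mul (fun _ => by simp [hs.ne_empty]) (by simp)]
  norm_cast at h ⊢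
  exact (one_le_pow₀ h).trans sq_sum_le_card_mul_sum_sq

section LowerBound

variable {X : Type*} [MetricSpace X] [MeasurableSpace X] {r : ℝ}

lemma sum_measure_sq_le_lintegral_measure_closedBall (μ : Measure X) {ι : Type*} (s : Finset ι)
    {W : ι → Set X} (hW : ∀ i ∈ s, MeasurableSet (W i)) (hdisj : (s : Set ι).PairwiseDisjoint W)
    (hdiam : ∀ i ∈ s, ediam (W i) ≤ ENNReal.ofReal r) (hr : 0 ≤ r) :
    ∑ i ∈ s, μ (W i) ^ 2 ≤ ∫⁻ x, μ (closedBall x r) ∂μ :=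
  calc ∑ i ∈ s, μ (W i) ^ 2 = ∑ i ∈ s, ∫⁻ _ in W i, μ (W i) ∂μ := by
        simp only [setLIntegral_const, sq]
    _ ≤ ∑ i ∈ s, ∫⁻ x in W i, μ (closedBall x r) ∂μ :=
        Finset.sum_le_sum fun i hi => setLIntegral_mono' (hW i hi) fun _ hx =>
          measure_mono (subset_closedBall_of_ediam_le hx (hdiam i hi) hr)
    _ = ∫⁻ x in ⋃ i ∈ s, W i, μ (closedBall x r) ∂μ :=
        (lintegral_biUnion_finset hdisj hW _).symm
    _ ≤ ∫⁻ x, μ (closedBall x r) ∂μ := setLIntegral_le_lintegral _ _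

lemma inv_card_le_lintegral_measure_closedBall [OpensMeasurableSpace X] (μ : Measure X)
    [IsProbabilityMeasure μ] (𝒰 : Finset (Set X)) (hdiam : ∀ U ∈ 𝒰, ediam U ≤ ENNReal.ofReal r)
    (hcov : μ (⋃ U ∈ 𝒰, U)ᶜ = 0) (hr : 0 ≤ r) :
    ((𝒰.card : ℝ≥0∞))⁻¹ ≤ ∫⁻ x, μ (closedBall x r) ∂μ := by
  set V : Fin 𝒰.card → Set X := fun i => closure (𝒰.equivFin.symm i)
  have hV : ∀ i, MeasurableSet (V i) := fun i => isClosed_closure.measurableSet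
  have hW : ∀ i, MeasurableSet (disjointed V i) := fun i =>
    disjointedRec (fun _ _ ht => ht.diff (hV _)) (hV i)
  have hcovV : ⋃ U ∈ 𝒰, U ⊆ ⋃ i, V i := iUnion₂_subset fun U hU => by
    simpa [V] using subset_iUnion V (𝒰.equivFin ⟨U, hU⟩) |>.trans' subset_closure
  have hmass : 1 ≤ ∑ i, μ (disjointed V i) := calc
    1 = μ univ := measure_univ.symm
    _ ≤ μ (⋃ U ∈ 𝒰, U) + μ (⋃ U ∈ 𝒰, U)ᶜ := measure_univ_le_add_compl _
    _ ≤ μ (⋃ i, disjointed V i) := by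
        rw [hcov, add_zero, iUnion_disjointed]
        exact measure_mono hcovV
    _ = ∑ i, μ (disjointed V i) := by
        rw [measure_iUnion (disjoint_disjointed V) hW, tsum_fintype]
  calc ((𝒰.card : ℝ≥0∞))⁻¹ ≤ ∑ i, μ (disjointed V i) ^ 2 := by
        simpa using ENNReal.inv_card_le_sum_sq Finset.univ hmass
    _ ≤ ∫⁻ x, μ (closedBall x r) ∂μ :=
        sum_measure_sq_le_lintegral_measure_closedBall μ _ (fun i _ => hW i)
          (fun i _ j _ hij => disjoint_disjointed V hij)
          (fun i _ => (ediam_mono (disjointed_subset V i)).trans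
            ((ediam_closure _).trans_le (hdiam _ (𝒰.equivFin.symm i).2))) hr

lemma lintegral_measure_closedBall_le_one (μ : Measure X) [IsProbabilityMeasure μ] :
    ∫⁻ x, μ (closedBall x r) ∂μ ≤ 1 :=
  (lintegral_mono fun _ => prob_le_one).trans_eq (by simp)

lemma inv_coverNum_le_corrInt [ProperSpace X] [BorelSpace X] {E : Set X} (hE : IsBounded E)
    (hr : 0 < r) {μ : Measure X} (hμ : μ ∈ probOn E) : ((coverNum E r : ℝ))⁻¹ ≤ corrInt μ r := by
  have : IsProbabilityMeasure μ := hμ.1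
  obtain ⟨𝒰, hcard, hdiam, hcov⟩ := exists_finset_card_eq_coverNum hE hr
  have hnull : μ (⋃ U ∈ 𝒰, U)ᶜ = 0 :=
    measure_mono_null (compl_subset_compl.2 hcov) (measure_compl_eq_zero_of_mem_probOn hμ)
  have := ENNReal.toReal_mono
    (ne_top_of_le_ne_top ENNReal.one_ne_top (lintegral_measure_closedBall_le_one μ))
    (inv_card_le_lintegral_measure_closedBall μ 𝒰 hdiam hnull hr.le)
  rwa [ENNReal.toReal_inv, hcard, ENNReal.toReal_natCast] at this

end LowerBound

section UpperBound

variable {X : Type*} [MetricSpace X] [MeasurableSpace X] {r : ℝ}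

lemma lintegral_measure_closedBall_eq_sum_sq [MeasurableSingletonClass X] (μ : Measure X)
    {S : Finset X} (hS : IsSeparated (ENNReal.ofReal r) (S : Set X)) (hμS : μ (S : Set X)ᶜ = 0)
    (hr : 0 ≤ r) : ∫⁻ x, μ (closedBall x r) ∂μ = ∑ t ∈ S, μ {t} ^ 2 :=
  calc ∫⁻ x, μ (closedBall x r) ∂μ = ∫⁻ x in S, μ (closedBall x r) ∂μ := by
        rw [Measure.restrict_eq_self_of_ae_mem (s := (S : Set X)) hμS]
    _ = ∑ t ∈ S, μ (closedBall t r) * μ {t} := lintegral_finset _ _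
    _ = ∑ t ∈ S, μ {t} ^ 2 := Finset.sum_congr rfl fun t ht => by
        rw [← measure_inter_conull hμS, closedBall_inter_eq_singleton_of_isSeparated hS ht hr, sq]

lemma lintegral_uniformOn_measure_closedBall [MeasurableSingletonClass X] {S : Finset X}
    (hS : IsSeparated (ENNReal.ofReal r) (S : Set X)) (hne : S.Nonempty) (hr : 0 ≤ r) :
    ∫⁻ x, uniformOn (S : Set X) (closedBall x r) ∂uniformOn (S : Set X) =
      ((S.card : ℝ≥0∞))⁻¹ := by
  classical
  have hS0 : (S.card : ℝ≥0∞) ≠ 0 := by simp [hne.ne_empty]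
  have hsingle : ∀ t ∈ S, uniformOn (S : Set X) {t} = ((S.card : ℝ≥0∞))⁻¹ := fun t ht => by
    rw [← Finset.coe_singleton, uniformOn_apply_finset, Finset.inter_singleton_of_mem ht,
      Finset.card_singleton, Nat.cast_one, one_div]
  rw [lintegral_measure_closedBall_eq_sum_sq _ hS ((uniformOn_eq_zero_iff S.finite_toSet).2
    (inter_compl_self _)) hr, Finset.sum_congr rfl fun t ht => by rw [hsingle t ht],
    Finset.sum_const, nsmul_eq_mul, sq, ← mul_assoc, ENNReal.mul_inv_cancel hS0 (by simp), one_mul]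

lemma exists_mem_probOn_corrInt_le [ProperSpace X] [BorelSpace X] {C : ℕ}
    (hC : ∀ x : X, coverNum (closedBall x r) r ≤ C) {E : Set X} (hE : IsBounded E)
    (hne : E.Nonempty) (hr : 0 < r) :
    ∃ μ ∈ probOn E, corrInt μ r ≤ C * ((coverNum E r : ℝ))⁻¹ := by
  have hpack : packingNumber r.toNNReal E ≠ ⊤ := (hE.isCompact_closure.totallyBounded.subset
    subset_closure).packingNumber_ne_top (by simpa using hr)
  set S := maximalSeparatedSet r.toNNReal E
  have hSfin : S.Finite :=
    Set.encard_ne_top_iff.1 ((encard_maximalSeparatedSet hpack).trans_ne hpack)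
  set T := hSfin.toFinset
  have hT : (T : Set X) = S := hSfin.coe_toFinset
  have hTne : T.Nonempty := by
    rw [← Finset.coe_nonempty, hT, ← Set.encard_pos, encard_maximalSeparatedSet hpack]
    exact packingNumber_pos_iff.2 hne
  have hcov : E ⊆ ⋃ t ∈ T, closedBall t r := fun x hx => by
    obtain ⟨t, ht, hxt⟩ := mem_iUnion₂.1
      (isCover_iff_subset_iUnion_closedBall.1 (isCover_maximalSeparatedSet hpack) hx)
    exact mem_iUnion₂.2
      ⟨t, hSfin.mem_toFinset.2 ht, by simpa [Real.coe_toNNReal _ hr.le] using hxt⟩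
  have hcount : coverNum E r ≤ T.card * C := calc
    coverNum E r ≤ ∑ t ∈ T, coverNum (closedBall t r) r :=
      coverNum_le_sum_of_subset_biUnion T (fun _ _ => isBounded_closedBall) hcov hr
    _ ≤ ∑ _t ∈ T, C := Finset.sum_le_sum fun t _ => hC t
    _ = T.card * C := by rw [Finset.sum_const, smul_eq_mul]
  have hsep : IsSeparated (ENNReal.ofReal r) (T : Set X) := hT ▸ isSeparated_maximalSeparatedSet
  refine ⟨uniformOn T, uniformOn_mem_probOn T.finite_toSet (by simpa using hTne)
    (hT ▸ maximalSeparatedSet_subset), ?_⟩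
  have hpos : (0 : ℝ) < coverNum E r := by exact_mod_cast coverNum_pos hE hne hr
  rw [corrInt, lintegral_uniformOn_measure_closedBall hsep hTne hr.le, ENNReal.toReal_inv,
    ENNReal.toReal_natCast, ← div_eq_mul_inv, le_div_iff₀ hpos,
    inv_mul_le_iff₀ (by simpa using hTne)]
  exact_mod_cast hcount

end UpperBound

theorem stmt3 (d : ℕ) :
    ∃ c₁ c₂ : ℝ, 0 < c₁ ∧ 0 < c₂ ∧
      ∀ E : Set (EuclideanSpace ℝ (Fin d)), Bornology.IsBounded E → E.Nonempty →
      ∀ r : ℝ, 0 < r →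
        c₁ * ((coverNum E r : ℝ))⁻¹ ≤ sInf ((fun μ => corrInt μ r) '' probOn E) ∧
        sInf ((fun μ => corrInt μ r) '' probOn E) ≤ c₂ * ((coverNum E r : ℝ))⁻¹ := by
  set C := coverNum (closedBall (0 : EuclideanSpace ℝ (Fin d)) 1) 1
  have hC : 0 < C :=
    coverNum_pos isBounded_closedBall ⟨0, mem_closedBall_self zero_le_one⟩ one_pos
  refine ⟨1, C, one_pos, by exact_mod_cast hC, fun E hE hne r hr => ?_⟩
  obtain ⟨μ₀, hμ₀, hμ₀C⟩ :=
    exists_mem_probOn_corrInt_le (fun x => coverNum_closedBall_le x hr) hE hne hr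
  constructor
  · rw [one_mul]
    refine le_csInf ⟨_, μ₀, hμ₀, rfl⟩ ?_
    rintro _ ⟨μ, hμ, rfl⟩
    exact inv_coverNum_le_corrInt hE hr hμ
  · have hbdd : BddBelow ((fun μ => corrInt μ r) '' probOn E) :=
      ⟨0, by rintro _ ⟨μ, -, rfl⟩; exact ENNReal.toReal_nonneg⟩
    exact (csInf_le hbdd ⟨μ₀, hμ₀, rfl⟩).trans hμ₀C
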